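/- Let C be an MRD code of length n and dimension k over F_{q^m} with m ≥ n, and minimum rank distance d = n − k + 1. Then the number of codewords of C of rank weight d is A_d = [n choose d]_q (q^m − 1), where [n choose d]_q is the Gaussian binomial coefficient. -/

import Mathlib

open Module

/-- The rank support of a word `c ∈ K^n`, `K = F_{q^m}`: the `F_q`-row space of
the matrix representing `c` with respect to the fixed `F_q`-basis `B` of `K`. -/
def rsupp {Fq K : Type*} [Field Fq] [Field K] [Algebra Fq K] {ι : Type*}
    (B : Basis ι Fq K) {n : ℕ} (c : Fin n → K) : Submodule Fq (Fin n → Fq) :=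
  Submodule.span Fq (Set.range fun i : ι => fun j : Fin n => B.repr (c j) i)

/-- The Gaussian binomial coefficient `[n choose k]_q`, defined via the
`q`-Pascal recurrence `[n+1, k+1]_q = [n, k]_q + q^{k+1} [n, k+1]_q`. -/
def gaussBinom (q : ℕ) : ℕ → ℕ → ℕ
  | 0, 0 => 1
  | 0, _ + 1 => 0
  | _ + 1, 0 => 1
  | n + 1, k + 1 => gaussBinom q n k + q ^ (k + 1) * gaussBinom q n (k + 1)

/-! ### Numerics: Gaussian binomials count subspaces -/

lemma MRDaux.prod_shift (q : ℤ) (a k : ℕ) :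
    ∏ i ∈ Finset.range (k+1), (q^(a+1) - q^i)
      = (q^(a+1) - 1) * (q^k * ∏ i ∈ Finset.range k, (q^a - q^i)) := by
  rw [Finset.prod_range_succ']
  have h : ∀ i ∈ Finset.range k, q^(a+1) - q^(i+1) = q * (q^a - q^i) := by
    intro i _; ring
  rw [Finset.prod_congr rfl h, Finset.prod_mul_distrib, Finset.prod_const,
    Finset.card_range, pow_zero]
  ring

lemma MRDaux.gauss_mul (q : ℕ) : ∀ n k : ℕ, (gaussBinom q n k : ℤ) *
      ∏ i ∈ Finset.range k, ((q:ℤ)^k - (q:ℤ)^i)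
    = ∏ i ∈ Finset.range k, ((q:ℤ)^n - (q:ℤ)^i) := by
  intro n
  induction n with
  | zero =>
    intro k
    match k with
    | 0 => simp [gaussBinom]
    | k + 1 =>
      rw [show gaussBinom q 0 (k+1) = 0 from rfl]
      rw [(Finset.prod_eq_zero (Finset.mem_range.mpr (Nat.succ_pos k)) (by simp) :
        ∏ i ∈ Finset.range (k+1), ((q:ℤ)^0 - (q:ℤ)^i) = 0)]
      simp
  | succ n ih =>
    intro k
    match k with
    | 0 => simp [gaussBinom]
    | k + 1 =>
      have h1 := ih k
      have h2 := ih (k + 1)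
      rw [MRDaux.prod_shift] at h2
      rw [Finset.prod_range_succ ((fun i => (q:ℤ)^n - (q:ℤ)^i)) k] at h2
      rw [show gaussBinom q (n+1) (k+1)
          = gaussBinom q n k + q ^ (k + 1) * gaussBinom q n (k + 1) from rfl]
      rw [MRDaux.prod_shift, MRDaux.prod_shift]
      push_cast
      linear_combination (((q:ℤ)^(k+1) - 1) * (q:ℤ)^k) * h1 + (q:ℤ)^(k+1) * h2

lemma MRDaux.gauss_mul_nat (q : ℕ) (hq : 1 ≤ q) {n k : ℕ} (hkn : k ≤ n) :
    gaussBinom q n k * ∏ i ∈ Finset.range k, (q^k - q^i)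
      = ∏ i ∈ Finset.range k, (q^n - q^i) := by
  have key := MRDaux.gauss_mul q n k
  have e : ∀ a : ℕ, k ≤ a → ((∏ i ∈ Finset.range k, (q^a - q^i) : ℕ) : ℤ)
      = ∏ i ∈ Finset.range k, ((q:ℤ)^a - (q:ℤ)^i) := by
    intro a ha
    rw [Nat.cast_prod]
    refine Finset.prod_congr rfl fun i hi => ?_
    have hle : q^i ≤ q^a :=
      Nat.pow_le_pow_right hq (le_trans (le_of_lt (Finset.mem_range.mp hi)) ha)
    push_cast [Nat.cast_sub hle]
    ring
  rw [← e k le_rfl, ← e n hkn] at key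
  exact_mod_cast key

attribute [local instance] Fintype.ofFinite

/-- Summing a constant fiber cardinality. -/
lemma MRDaux.card_fiber_sum {α β : Type*} [Finite α] [Finite β] (f : α → β) (c : ℕ)
    (h : ∀ b, Nat.card {a : α // f a = b} = c) : Nat.card α = Nat.card β * c := by
  classical
  rw [← Nat.card_congr (Equiv.sigmaFiberEquiv f), Nat.card_eq_fintype_card, Fintype.card_sigma,
    Finset.sum_congr rfl (fun b _ => by rw [← Nat.card_eq_fintype_card, h b]),
    Finset.sum_const, Finset.card_univ, ← Nat.card_eq_fintype_card, smul_eq_mul]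

lemma MRDaux.card_grass (Fq : Type*) [Field Fq] [Fintype Fq] {n k : ℕ} (hkn : k ≤ n) :
    Nat.card {W : Submodule Fq (Fin n → Fq) // finrank Fq ↥W = k}
      * ∏ i ∈ Finset.range k, (Fintype.card Fq ^ k - Fintype.card Fq ^ i)
      = ∏ i ∈ Finset.range k, (Fintype.card Fq ^ n - Fintype.card Fq ^ i) := by
  classical
  set q := Fintype.card Fq with hq
  set V := (Fin n → Fq)
  set G := {W : Submodule Fq V // finrank Fq ↥W = k}
  set T := {s : Fin k → V // LinearIndependent Fq s}
  have hfinV : finrank Fq V = n := finrank_fin_fun Fq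
  have htot : Nat.card T = ∏ i ∈ Finset.range k, (q ^ n - q ^ i) := by
    have := card_linearIndependent (K := Fq) (V := V) (k := k) (by rw [hfinV]; exact hkn)
    rw [this, hfinV, ← Fin.prod_univ_eq_prod_range]
  have hspan : ∀ s : T, finrank Fq ↥(Submodule.span Fq (Set.range s.1)) = k := by
    intro s; rw [finrank_span_eq_card s.2, Fintype.card_fin]
  let φ : T → G := fun s => ⟨Submodule.span Fq (Set.range s.1), hspan s⟩
  have hfib : ∀ W : G, Nat.card {s : T // φ s = W} = ∏ i ∈ Finset.range k, (q ^ k - q ^ i) := by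
    intro W
    have hWk : finrank Fq ↥(W.1) = k := W.2
    have e : {s : T // φ s = W} ≃ {t : Fin k → ↥W.1 // LinearIndependent Fq t} := by
      refine ⟨fun s => ⟨fun i => ⟨s.1.1 i, ?_⟩, ?_⟩, fun t => ⟨⟨fun i => (t.1 i : V), ?_⟩, ?_⟩, ?_, ?_⟩
      · have h1 : s.1.1 i ∈ Submodule.span Fq (Set.range s.1.1) :=
          Submodule.subset_span (Set.mem_range_self i)
        have hw : Submodule.span Fq (Set.range s.1.1) = W.1 := congrArg Subtype.val s.2
        rwa [hw] at h1
      · apply LinearIndependent.of_comp (W.1).subtype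
        exact s.1.2
      · exact (t.2.map' (W.1).subtype (Submodule.ker_subtype _))
      · apply Subtype.ext
        show Submodule.span Fq (Set.range fun i => ((t.1 i : V))) = W.1
        have h1 : Submodule.span Fq (Set.range t.1) = (⊤ : Submodule Fq ↥W.1) := by
          apply Submodule.eq_top_of_finrank_eq
          rw [finrank_span_eq_card t.2, Fintype.card_fin, hWk]
        have h2 : Set.range (fun i => ((t.1 i : V))) = (W.1).subtype '' Set.range t.1 := by
          ext x; simp [Set.range_comp]
        rw [h2, ← Submodule.map_span, h1, Submodule.map_subtype_top]
      · intro s; rfl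
      · intro t; rfl
    rw [Nat.card_congr e]
    have := card_linearIndependent (K := Fq) (V := ↥W.1) (k := k) (by rw [hWk])
    rw [this, hWk, ← Fin.prod_univ_eq_prod_range]
  rw [MRDaux.card_fiber_sum φ _ hfib] at htot
  rw [← htot]

lemma MRDaux.card_grass_eq (Fq : Type*) [Field Fq] [Fintype Fq] {n k : ℕ} (hkn : k ≤ n) :
    Nat.card {W : Submodule Fq (Fin n → Fq) // finrank Fq ↥W = k}
      = gaussBinom (Fintype.card Fq) n k := by
  have hq : 1 < Fintype.card Fq := Fintype.one_lt_card
  have hP : 0 < ∏ i ∈ Finset.range k, (Fintype.card Fq ^ k - Fintype.card Fq ^ i) := by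
    apply Finset.prod_pos
    intro i hi
    have := Nat.pow_lt_pow_right hq (Finset.mem_range.mp hi)
    omega
  apply Nat.eq_of_mul_eq_mul_right hP
  rw [MRDaux.card_grass Fq hkn, MRDaux.gauss_mul_nat _ (le_of_lt hq) hkn]

/-! ### Rank support machinery -/

section Rsupp

variable {Fq K : Type*} [Field Fq] [Field K] [Algebra Fq K]
variable {m n : ℕ} (B : Basis (Fin m) Fq K)

/-- the `i`-th row of the matrix of `c`. -/
noncomputable def MRDrow (c : Fin n → K) (i : Fin m) : Fin n → Fq := fun j => B.repr (c j) i

lemma rsupp_eq (c : Fin n → K) : rsupp B c = Submodule.span Fq (Set.range (MRDrow B c)) := rfl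

lemma sum_row_smul (c : Fin n → K) (j : Fin n) : ∑ i, MRDrow B c i j • B i = c j := B.sum_repr _

lemma row_mem_rsupp (c : Fin n → K) (i : Fin m) : MRDrow B c i ∈ rsupp B c :=
  Submodule.subset_span (Set.mem_range_self i)

lemma rsupp_le_iff (c : Fin n → K) (V : Submodule Fq (Fin n → Fq)) :
    rsupp B c ≤ V ↔ ∀ i, MRDrow B c i ∈ V := by
  constructor
  · exact fun h i => h (row_mem_rsupp B c i)
  · intro h
    rw [rsupp_eq]
    exact Submodule.span_le.mpr (Set.range_subset_iff.mpr h)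

lemma rsupp_eq_bot_iff (c : Fin n → K) : rsupp B c = ⊥ ↔ c = 0 := by
  constructor
  · intro h
    funext j
    have h0 : ∀ i, MRDrow B c i = 0 := by
      intro i
      have := row_mem_rsupp B c i
      rw [h, Submodule.mem_bot] at this
      exact this
    have := sum_row_smul B c j
    simp only [h0] at this
    simpa using this.symm
  · intro h
    subst h
    rw [rsupp_eq]
    apply le_bot_iff.mp
    apply Submodule.span_le.mpr
    rintro x ⟨i, rfl⟩
    have h0 : MRDrow B (0 : Fin n → K) i = 0 := by funext j; simp [MRDrow]
    show MRDrow B (0 : Fin n → K) i ∈ (⊥ : Submodule Fq (Fin n → Fq))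
    simp [h0]

lemma row_smul (a : K) (c : Fin n → K) (i : Fin m) :
    MRDrow B (a • c) i = ∑ t, B.repr (a * B t) i • MRDrow B c t := by
  funext j
  have hc : a * c j = ∑ t, MRDrow B c t j • (a * B t) := by
    conv_lhs => rw [← sum_row_smul B c j]
    rw [Finset.mul_sum]
    exact Finset.sum_congr rfl fun t _ => by rw [Algebra.smul_def, Algebra.smul_def]; ring
  show B.repr ((a • c) j) i = _
  rw [Pi.smul_apply, smul_eq_mul, hc]
  rw [map_sum]
  simp only [map_smul, Finsupp.coe_smul, Finsupp.coe_finset_sum, Finset.sum_apply,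
    Pi.smul_apply, smul_eq_mul]
  exact Finset.sum_congr rfl fun t _ => by simp [MRDrow, mul_comm]

/-- The `K`-subspace of words all of whose rows lie in `V`. -/
def MRD_SV (V : Submodule Fq (Fin n → Fq)) : Submodule K (Fin n → K) where
  carrier := {c | ∀ i : Fin m, MRDrow B c i ∈ V}
  add_mem' := by
    intro a b ha hb i
    have : MRDrow B (a + b) i = MRDrow B a i + MRDrow B b i := by
      funext j; simp [MRDrow]
    rw [this]; exact V.add_mem (ha i) (hb i)
  zero_mem' := by
    intro i
    have : MRDrow B (0 : Fin n → K) i = 0 := by funext j; simp [MRDrow]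
    rw [this]; exact V.zero_mem
  smul_mem' := by
    intro a c hc i
    rw [row_smul]
    exact Submodule.sum_mem _ fun t _ => V.smul_mem _ (hc t)

lemma mem_MRD_SV {V : Submodule Fq (Fin n → Fq)} {c : Fin n → K} :
    c ∈ MRD_SV B V ↔ ∀ i, MRDrow B c i ∈ V := Iff.rfl

lemma rsupp_le_iff_mem_SV (c : Fin n → K) (V : Submodule Fq (Fin n → Fq)) :
    rsupp B c ≤ V ↔ c ∈ MRD_SV B V := by rw [rsupp_le_iff, mem_MRD_SV]

lemma finrank_MRD_SV (V : Submodule Fq (Fin n → Fq)) :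
    finrank K ↥(MRD_SV B V) = finrank Fq ↥V := by
  classical
  set d := finrank Fq ↥V with hd
  let b : Basis (Fin d) Fq ↥V := finBasis Fq ↥V
  let v : Fin d → (Fin n → Fq) := fun t => (b t : Fin n → Fq)
  have hv : LinearIndependent Fq v :=
    b.linearIndependent.map' V.subtype (Submodule.ker_subtype V)
  let em : (Fin n → Fq) → (Fin n → K) := fun w j => algebraMap Fq K (w j)
  have row_em : ∀ (w : Fin n → Fq) i, MRDrow B (em w) i = B.repr 1 i • w := by
    intro w i; funext j
    show B.repr (algebraMap Fq K (w j)) i = (B.repr 1 i • w) j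
    rw [Algebra.algebraMap_eq_smul_one, map_smul]
    simp [mul_comm]
  have hmem : ∀ t, em (v t) ∈ MRD_SV B V := by
    intro t i
    rw [row_em]
    exact V.smul_mem _ (b t).2
  let E : Fin d → ↥(MRD_SV B V) := fun t => ⟨em (v t), hmem t⟩
  have hLIamb : LinearIndependent K (fun t => em (v t)) := by
    rw [Fintype.linearIndependent_iff]
    intro g hg t
    have hj : ∀ j, ∑ s, (v s j) • g s = (0:K) := by
      intro j
      have h1 := congrFun hg j
      simp only [Finset.sum_apply, Pi.smul_apply, smul_eq_mul, Pi.zero_apply] at h1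
      rw [← h1]
      exact Finset.sum_congr rfl fun s _ => by rw [Algebra.smul_def, mul_comm]
    have hcoef : ∀ i s, B.repr (g s) i = 0 := by
      intro i
      have hsum : ∑ s, B.repr (g s) i • v s = (0 : Fin n → Fq) := by
        funext j
        have h2 := congrArg (fun x => B.repr x i) (hj j)
        simp only [map_sum, map_smul, Finsupp.coe_finset_sum, Finset.sum_apply,
          Finsupp.coe_smul, Pi.smul_apply, smul_eq_mul, map_zero,
          Finsupp.coe_zero, Pi.zero_apply] at h2
        simpa [Finset.sum_apply, mul_comm] using h2
      exact Fintype.linearIndependent_iff.mp hv _ hsum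
    have h3 : B.repr (g t) = 0 := Finsupp.ext fun i => hcoef i t
    simpa using congrArg B.repr.symm h3
  have hLIE : LinearIndependent K E := by
    apply LinearIndependent.of_comp (MRD_SV B V).subtype
    exact hLIamb
  have hspan : ⊤ ≤ Submodule.span K (Set.range E) := by
    rintro ⟨c, hc⟩ -
    let r : Fin m → ↥V := fun i => ⟨MRDrow B c i, hc i⟩
    let a : Fin d → K := fun t => ∑ i, algebraMap Fq K (b.repr (r i) t) * B i
    have hrowkey : ∀ i, ∑ t, b.repr (r i) t • v t = MRDrow B c i := by
      intro i
      have h4 := b.sum_repr (r i)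
      calc ∑ t, b.repr (r i) t • v t
          = (↑(∑ t, b.repr (r i) t • b t) : Fin n → Fq) := by
            simp only [v, AddSubmonoidClass.coe_finset_sum, Submodule.coe_smul]
        _ = ((r i : ↥V) : Fin n → Fq) := by rw [h4]
        _ = MRDrow B c i := rfl
    have hamb : c = ∑ t, a t • em (v t) := by
      funext j
      rw [Finset.sum_apply]
      calc c j = ∑ i, MRDrow B c i j • B i := (sum_row_smul B c j).symm
        _ = ∑ i, algebraMap Fq K (∑ t, b.repr (r i) t * v t j) * B i := by
            refine Finset.sum_congr rfl fun i _ => ?_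
            have := congrFun (hrowkey i) j
            rw [Finset.sum_apply] at this
            rw [← this, Algebra.smul_def]
            norm_num
        _ = ∑ i, ∑ t, algebraMap Fq K (b.repr (r i) t) * algebraMap Fq K (v t j) * B i := by
            refine Finset.sum_congr rfl fun i _ => ?_
            rw [map_sum, Finset.sum_mul]
            refine Finset.sum_congr rfl fun t _ => by rw [map_mul]
        _ = ∑ t, ∑ i, algebraMap Fq K (b.repr (r i) t) * algebraMap Fq K (v t j) * B i :=
            Finset.sum_comm
        _ = ∑ t, (a t • em (v t)) j := by
            refine Finset.sum_congr rfl fun t _ => ?_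
            show _ = a t * em (v t) j
            rw [Finset.sum_mul]
            exact Finset.sum_congr rfl fun i _ => by ring
    have hc_eq : (⟨c, hc⟩ : ↥(MRD_SV B V)) = ∑ t, a t • E t := by
      apply Subtype.ext
      show c = ((∑ t, a t • E t : ↥(MRD_SV B V)) : Fin n → K)
      rw [hamb, AddSubmonoidClass.coe_finset_sum]
      exact Finset.sum_congr rfl fun t _ => rfl
    rw [hc_eq]
    exact Submodule.sum_mem _ fun t _ =>
      Submodule.smul_mem _ _ (Submodule.subset_span (Set.mem_range_self t))
  rw [finrank_eq_card_basis (Basis.mk hLIE hspan), Fintype.card_fin]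

end Rsupp

/-- for an MRD code `C` of length `n`, dimension `k` over
`F_{q^m}` with `m ≥ n` and minimum rank distance `d = n − k + 1`, the number of
codewords of rank weight `d` is `A_d = [n choose d]_q (q^m − 1)`. -/
theorem stmt_19 {Fq K : Type*} [Field Fq] [Fintype Fq] [Field K] [Algebra Fq K]
    {m n k : ℕ} (B : Basis (Fin m) Fq K) (hmn : n ≤ m)
    (C : Submodule K (Fin n → K)) (hk : Module.finrank K ↥C = k)
    -- `C` is MRD: its minimum rank distance equals `n − k + 1`
    (hMRD : sInf {w : ℕ | ∃ c ∈ C, c ≠ 0 ∧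
        Module.finrank Fq ↥(rsupp B c) = w} = n - k + 1) :
    Set.ncard {c : Fin n → K | c ∈ C ∧
        Module.finrank Fq ↥(rsupp B c) = n - k + 1} =
      gaussBinom (Fintype.card Fq) n (n - k + 1) * (Fintype.card Fq ^ m - 1) := by
  classical
  set q := Fintype.card Fq with hq
  set d := n - k + 1 with hdd
  -- basic finiteness
  have hFinK : Finite K := Finite.of_equiv _ B.equivFun.symm.toEquiv
  have hfinrK : finrank Fq K = m := by
    rw [finrank_eq_card_basis B, Fintype.card_fin]
  have hcardK : Fintype.card K = q ^ m := by
    rw [card_eq_pow_finrank (K := Fq) (V := K), hfinrK]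
  -- C is nontrivial
  have hCbot : C ≠ ⊥ := by
    intro h
    rw [h] at hMRD
    have hemp : {w : ℕ | ∃ c ∈ (⊥ : Submodule K (Fin n → K)), c ≠ 0 ∧
        finrank Fq ↥(rsupp B c) = w} = ∅ := by
      ext w
      simp only [Submodule.mem_bot, Set.mem_setOf_eq, Set.mem_empty_iff_false, iff_false]
      rintro ⟨c, rfl, hc0, -⟩
      exact hc0 rfl
    rw [hemp, Nat.sInf_empty] at hMRD
    omega
  have hk1 : 1 ≤ k := by
    rw [← hk]
    have : Nontrivial ↥C := Submodule.nontrivial_iff_ne_bot.mpr hCbot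
    exact Module.finrank_pos
  have hkn : k ≤ n := by
    rw [← hk]
    have h2 : finrank K ↥C ≤ finrank K (Fin n → K) := Submodule.finrank_le C
    rwa [finrank_fin_fun] at h2
  have hdn : d ≤ n := by omega
  have hkd : k + d = n + 1 := by omega
  have hd1 : 1 ≤ d := by omega
  -- lower bound on nonzero weights
  have hlow : ∀ c ∈ C, c ≠ 0 → d ≤ finrank Fq ↥(rsupp B c) := by
    intro c hc h0
    rw [← hMRD]
    exact Nat.sInf_le ⟨c, hc, h0, rfl⟩
  -- the per-subspace count
  have key : ∀ V : Submodule Fq (Fin n → Fq), finrank Fq ↥V = d →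
      (∀ c : Fin n → K, (c ∈ C ∧ rsupp B c = V) ↔ (c ∈ C ⊓ MRD_SV B V ∧ c ≠ 0)) ∧
      finrank K ↥(C ⊓ MRD_SV B V) = 1 := by
    intro V hV
    set D := C ⊓ MRD_SV B V with hD
    -- D has positive rank
    have hrk_sum : finrank K ↥(C ⊔ MRD_SV B V) + finrank K ↥D = k + d := by
      rw [Submodule.finrank_sup_add_finrank_inf_eq, hk, finrank_MRD_SV, hV]
    have hsup_le : finrank K ↥(C ⊔ MRD_SV B V) ≤ n := by
      have h2 : finrank K ↥(C ⊔ MRD_SV B V) ≤ finrank K (Fin n → K) := Submodule.finrank_le _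
      rwa [finrank_fin_fun] at h2
    have hDpos : 1 ≤ finrank K ↥D := by omega
    -- membership characterization
    have hmemchar : ∀ c : Fin n → K, (c ∈ C ∧ rsupp B c = V) ↔ (c ∈ D ∧ c ≠ 0) := by
      intro c
      constructor
      · rintro ⟨hcC, hrs⟩
        have hne : c ≠ 0 := by
          intro h0
          rw [(rsupp_eq_bot_iff B c).mpr h0] at hrs
          rw [← hrs] at hV
          simp [finrank_bot] at hV
        exact ⟨⟨hcC, (rsupp_le_iff_mem_SV B c V).mp (le_of_eq hrs)⟩, hne⟩
      · rintro ⟨⟨hcC, hcS⟩, hne⟩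
        refine ⟨hcC, ?_⟩
        apply Submodule.eq_of_le_of_finrank_le ((rsupp_le_iff_mem_SV B c V).mpr hcS)
        rw [hV]
        exact hlow c hcC hne
    refine ⟨hmemchar, le_antisymm ?_ hDpos⟩
    -- D has rank at most 1
    have hDne : D ≠ ⊥ := by
      intro h
      rw [h] at hDpos
      simp [finrank_bot] at hDpos
    obtain ⟨c1, hc1D, hc1ne⟩ := Submodule.exists_mem_ne_zero_of_ne_bot hDne
    have hle_span : D ≤ Submodule.span K {c1} := by
      intro c2 hc2
      obtain ⟨j0, hj0⟩ := Function.ne_iff.mp hc1ne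
      have hj0' : c1 j0 ≠ 0 := hj0
      set a := c2 j0 * (c1 j0)⁻¹ with ha
      have hdiff : c2 - a • c1 ∈ D := D.sub_mem hc2 (D.smul_mem a hc1D)
      have hdiffj0 : (c2 - a • c1) j0 = 0 := by
        simp only [Pi.sub_apply, Pi.smul_apply, smul_eq_mul, ha]
        field_simp
        ring
      have hzero : c2 - a • c1 = 0 := by
        by_contra h0
        have hCmem : c2 - a • c1 ∈ C := hdiff.1
        have hlb := hlow _ hCmem h0
        set H := LinearMap.ker (LinearMap.proj j0 : (Fin n → Fq) →ₗ[Fq] Fq) with hH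
        have hsub : rsupp B (c2 - a • c1) ≤ V ⊓ H := by
          apply le_inf
          · exact (rsupp_le_iff_mem_SV B _ V).mpr hdiff.2
          · rw [rsupp_le_iff]
            intro i
            rw [LinearMap.mem_ker]
            show MRDrow B (c2 - a • c1) i j0 = 0
            show B.repr ((c2 - a • c1) j0) i = 0
            rw [hdiffj0]
            simp
        have hlt : V ⊓ H < V := by
          refine lt_of_le_of_ne inf_le_left ?_
          intro heq
          have hVH : V ≤ H := by rw [← heq]; exact inf_le_right
          -- but some row of c1 has nonzero j0 entry
          have hrepr : B.repr (c1 j0) ≠ 0 := by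
            intro h
            apply hj0'
            have := congrArg B.repr.symm h
            simpa using this
          obtain ⟨i, hi⟩ := Finsupp.ne_iff.mp hrepr
          have hrow : MRDrow B c1 i ∈ V := hc1D.2 i
          have := hVH hrow
          rw [LinearMap.mem_ker] at this
          exact hi (by simpa [MRDrow] using this)
        have hfr : finrank Fq ↥(V ⊓ H) < d := by
          rw [← hV]
          exact Submodule.finrank_lt_finrank_of_lt hlt
        have := Submodule.finrank_mono hsub
        omega
      have : c2 = a • c1 := by
        have := sub_eq_zero.mp hzero
        exact this
      rw [this]
      exact Submodule.smul_mem _ _ (Submodule.subset_span rfl)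
    calc finrank K ↥D ≤ finrank K ↥(Submodule.span K {c1}) := Submodule.finrank_mono hle_span
      _ = 1 := finrank_span_singleton hc1ne
  -- now count via fibers over the Grassmannian
  set A := {c : Fin n → K | c ∈ C ∧ finrank Fq ↥(rsupp B c) = d} with hA
  set G := {V : Submodule Fq (Fin n → Fq) // finrank Fq ↥V = d} with hG
  let φ : ↥A → G := fun c => ⟨rsupp B c.1, c.2.2⟩
  have hfib : ∀ V : G, Nat.card {c : ↥A // φ c = V} = q ^ m - 1 := by
    intro V
    obtain ⟨hchar, hrk1⟩ := key V.1 V.2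
    set D := C ⊓ MRD_SV B V.1
    have e : {c : ↥A // φ c = V} ≃ {x : ↥D // x ≠ 0} := by
      refine ⟨fun c => ⟨⟨c.1.1, ?_⟩, ?_⟩, fun x => ⟨⟨x.1.1, ?_, ?_⟩, ?_⟩, ?_, ?_⟩
      · have h1 : rsupp B c.1.1 = V.1 := congrArg Subtype.val c.2
        exact ((hchar c.1.1).mp ⟨c.1.2.1, h1⟩).1
      · intro h
        have h1 : rsupp B c.1.1 = V.1 := congrArg Subtype.val c.2
        have := ((hchar c.1.1).mp ⟨c.1.2.1, h1⟩).2
        exact this (congrArg Subtype.val h)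
      · exact (x.1.2).1
      · -- finrank of rsupp = d
        have h1 := ((hchar x.1.1).mpr ⟨x.1.2, fun h => x.2 (Subtype.ext h)⟩).2
        rw [h1, V.2]
      · apply Subtype.ext
        show rsupp B x.1.1 = V.1
        exact ((hchar x.1.1).mpr ⟨x.1.2, fun h => x.2 (Subtype.ext h)⟩).2
      · intro c; rfl
      · intro x; rfl
    rw [Nat.card_congr e]
    have hcardD : Fintype.card ↥D = q ^ m := by
      rw [card_eq_pow_finrank (K := K) (V := ↥D), hrk1, hcardK, pow_one]
    rw [Nat.card_eq_fintype_card]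
    rw [Fintype.card_subtype_compl (fun x : ↥D => x = 0)]
    rw [hcardD, Fintype.card_subtype_eq (0 : ↥D)]
  have hcount : Nat.card ↥A = Nat.card G * (q ^ m - 1) :=
    MRDaux.card_fiber_sum φ _ hfib
  have hgrass : Nat.card G = gaussBinom q n d := MRDaux.card_grass_eq Fq hdn
  rw [← Nat.card_coe_set_eq]
  show Nat.card ↥A = gaussBinom q n d * (q ^ m - 1)
  rw [hcount, hgrass]
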